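/- γ_MB(P_3 □ P_3) = γ_MB'(P_3 □ P_3) = 4: in the Maker-Breaker domination game on the 3×3 grid, Dominator wins both the D-game and the S-game, and the minimum number of his moves under optimal play is 4 in each case. -/

import Mathlib

open SimpleGraph

namespace MBD

variable {V : Type*}

/-- Dominator's claimed set `D` is a dominating set of `G`. -/
def Dominates (G : SimpleGraph V) (D : Finset V) : Prop :=
  ∀ v : V, ∃ d ∈ D, d = v ∨ G.Adj d v

/-- Staller's claimed set `S` contains the whole closed neighborhood of some vertex. -/
def StallerWinSet (G : SimpleGraph V) (S : Finset V) : Prop :=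
  ∃ v : V, ∀ u : V, (u = v ∨ G.Adj u v) → u ∈ S

variable [DecidableEq V]

mutual
  /-- `DomD G k D S`: with Dominator having claimed `D`, Staller `S`, and Dominator to
  move, Dominator has a strategy winning the Maker-Breaker domination game on `G`
  using at most `k` further moves of his own. -/
  inductive DomD (G : SimpleGraph V) : ℕ → Finset V → Finset V → Prop
    | win {k : ℕ} {D S : Finset V} : Dominates G D → DomD G k D S
    | move {k : ℕ} {D S : Finset V} (v : V) : v ∉ D → v ∉ S →
        DomS G k (insert v D) S → DomD G (k + 1) D S
  /-- Like `DomD`, but it is Staller's turn to move. -/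
  inductive DomS (G : SimpleGraph V) : ℕ → Finset V → Finset V → Prop
    | win {k : ℕ} {D S : Finset V} : Dominates G D → DomS G k D S
    | move {k : ℕ} {D S : Finset V} : (∃ v : V, v ∉ D ∧ v ∉ S) →
        (∀ v : V, v ∉ D → v ∉ S → DomD G k D (insert v S)) → DomS G k D S
end

mutual
  /-- `StallD G k D S`: with Dominator having claimed `D`, Staller `S`, and Dominator to
  move, Staller has a strategy winning (claiming a whole closed neighborhood) within at
  most `k` further moves of her own. -/
  inductive StallD (G : SimpleGraph V) : ℕ → Finset V → Finset V → Prop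
    | win {k : ℕ} {D S : Finset V} : StallerWinSet G S → StallD G k D S
    | move {k : ℕ} {D S : Finset V} : (∃ v : V, v ∉ D ∧ v ∉ S) →
        (∀ v : V, v ∉ D → v ∉ S → StallS G k (insert v D) S) → StallD G k D S
  /-- Like `StallD`, but it is Staller's turn to move. -/
  inductive StallS (G : SimpleGraph V) : ℕ → Finset V → Finset V → Prop
    | win {k : ℕ} {D S : Finset V} : StallerWinSet G S → StallS G k D S
    | move {k : ℕ} {D S : Finset V} (v : V) : v ∉ D → v ∉ S →
        StallD G k D (insert v S) → StallS G (k + 1) D S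
end

/-- Dominator has a winning strategy in the D-game (Dominator starts). -/
def DominatorWinsD (G : SimpleGraph V) : Prop := ∃ k, DomD G k ∅ ∅

/-- Dominator has a winning strategy in the S-game (Staller starts). -/
def DominatorWinsS (G : SimpleGraph V) : Prop := ∃ k, DomS G k ∅ ∅

/-- Staller has a winning strategy in the D-game (Dominator starts). -/
def StallerWinsD (G : SimpleGraph V) : Prop := ∃ k, StallD G k ∅ ∅

/-- Staller has a winning strategy in the S-game (Staller starts). -/
def StallerWinsS (G : SimpleGraph V) : Prop := ∃ k, StallS G k ∅ ∅

/-- Outcome `𝒟`: Dominator wins both the D-game and the S-game. -/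
def outcomeD (G : SimpleGraph V) : Prop := DominatorWinsD G ∧ DominatorWinsS G

/-- Outcome `𝒮`: Staller wins both the D-game and the S-game. -/
def outcomeS (G : SimpleGraph V) : Prop := StallerWinsD G ∧ StallerWinsS G

/-- Outcome `𝒩`: the first player wins in both games. -/
def outcomeN (G : SimpleGraph V) : Prop := DominatorWinsD G ∧ StallerWinsS G

/-- `γ_MB(G)`: the minimum number of Dominator's moves needed to win the D-game,
`∞` if he has no winning strategy. -/
noncomputable def gMB (G : SimpleGraph V) : ℕ∞ :=
  sInf ((fun k : ℕ => (k : ℕ∞)) '' {k | DomD G k ∅ ∅})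

/-- `γ_MB'(G)`: the minimum number of Dominator's moves needed to win the S-game. -/
noncomputable def gMB' (G : SimpleGraph V) : ℕ∞ :=
  sInf ((fun k : ℕ => (k : ℕ∞)) '' {k | DomS G k ∅ ∅})

/-- `γ_SMB(G)`: the minimum number of Staller's moves needed to win the D-game. -/
noncomputable def gSMB (G : SimpleGraph V) : ℕ∞ :=
  sInf ((fun k : ℕ => (k : ℕ∞)) '' {k | StallD G k ∅ ∅})

/-- `γ_SMB'(G)`: the minimum number of Staller's moves needed to win the S-game. -/
noncomputable def gSMB' (G : SimpleGraph V) : ℕ∞ :=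
  sInf ((fun k : ℕ => (k : ℕ∞)) '' {k | StallS G k ∅ ∅})

end MBD

section Aux

set_option linter.unusedVariables false
set_option linter.unusedSectionVars false

open SimpleGraph MBD

instance instPathDec {n : ℕ} : DecidableRel (SimpleGraph.pathGraph n).Adj := fun u v =>
  decidable_of_iff (u.val + 1 = v.val ∨ v.val + 1 = u.val) SimpleGraph.pathGraph_adj.symm

instance instBoxDec {α β : Type*} (G : SimpleGraph α) (H : SimpleGraph β)
    [DecidableEq α] [DecidableEq β] [DecidableRel G.Adj] [DecidableRel H.Adj] :
    DecidableRel (G □ H).Adj := fun x y =>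
  decidable_of_iff (G.Adj x.1 y.1 ∧ x.2 = y.2 ∨ H.Adj x.2 y.2 ∧ x.1 = y.1)
    SimpleGraph.boxProd_adj.symm

variable {V : Type*} [DecidableEq V] (G : SimpleGraph V)

instance instDomDec [Fintype V] [DecidableRel G.Adj] (D : Finset V) :
    Decidable (Dominates G D) :=
  inferInstanceAs (Decidable (∀ v : V, ∃ d ∈ D, d = v ∨ G.Adj d v))

/-- One Staller-move layer, parameterized by the continuation predicate. -/
def decS (f : Finset V → Finset V → Prop) (D S : Finset V) : Prop :=
  Dominates G D ∨ ((∃ v, v ∉ D ∧ v ∉ S) ∧ ∀ v, v ∉ D → v ∉ S → f D (insert v S))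

/-- Fuel-based decidable version of `DomD`. -/
def decD : ℕ → Finset V → Finset V → Prop
  | 0, D, _ => Dominates G D
  | (k+1), D, S => Dominates G D ∨ ∃ v, v ∉ D ∧ v ∉ S ∧ decS G (decD k) (insert v D) S

instance instDecSDec [Fintype V] [DecidableRel G.Adj] (f : Finset V → Finset V → Prop)
    [H : ∀ D S, Decidable (f D S)] (D S : Finset V) : Decidable (decS G f D S) :=
  inferInstanceAs (Decidable (_ ∨ _))

instance instDecDDec [Fintype V] [DecidableRel G.Adj] :
    ∀ (k : ℕ) (D S : Finset V), Decidable (decD G k D S)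
  | 0, D, S => inferInstanceAs (Decidable (Dominates G D))
  | (k+1), D, S =>
      haveI : ∀ D S, Decidable (decD G k D S) := instDecDDec k
      inferInstanceAs (Decidable (_ ∨ _))

lemma domS_iff_aux {k : ℕ} (IH : ∀ D S, DomD G k D S ↔ decD G k D S) (D S : Finset V) :
    DomS G k D S ↔ decS G (decD G k) D S := by
  constructor
  · intro h
    cases h with
    | win h => exact Or.inl h
    | move hex hall => exact Or.inr ⟨hex, fun v h1 h2 => (IH _ _).1 (hall v h1 h2)⟩
  · rintro (h | ⟨hex, hall⟩)
    · exact DomS.win h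
    · exact DomS.move hex fun v h1 h2 => (IH _ _).2 (hall v h1 h2)

lemma domD_iff : ∀ (k : ℕ) (D S : Finset V), DomD G k D S ↔ decD G k D S := by
  intro k
  induction k with
  | zero =>
    intro D S
    constructor
    · intro h; cases h with | win h => exact h
    · exact fun h => DomD.win h
  | succ k ih =>
    intro D S
    show _ ↔ (Dominates G D ∨ ∃ v, v ∉ D ∧ v ∉ S ∧ decS G (decD G k) (insert v D) S)
    constructor
    · intro h
      cases h with
      | win h => exact Or.inl h
      | move v h1 h2 hs => exact Or.inr ⟨v, h1, h2, (domS_iff_aux G ih _ _).1 hs⟩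
    · rintro (h | ⟨v, h1, h2, hs⟩)
      · exact DomD.win h
      · exact DomD.move v h1 h2 ((domS_iff_aux G ih _ _).2 hs)

lemma domS_iff (k : ℕ) (D S : Finset V) : DomS G k D S ↔ decS G (decD G k) D S :=
  domS_iff_aux G (domD_iff G k) D S

lemma decS_mono {f g : Finset V → Finset V → Prop} (h : ∀ D S, f D S → g D S) (D S : Finset V) :
    decS G f D S → decS G g D S := by
  rintro (hd | ⟨hex, hall⟩)
  · exact Or.inl hd
  · exact Or.inr ⟨hex, fun v h1 h2 => h _ _ (hall v h1 h2)⟩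

lemma decD_succ : ∀ (k : ℕ) (D S : Finset V), decD G k D S → decD G (k+1) D S := by
  intro k
  induction k with
  | zero => intro D S h; exact Or.inl h
  | succ k ih =>
    intro D S h
    rcases h with hd | ⟨v, h1, h2, hs⟩
    · exact Or.inl hd
    · exact Or.inr ⟨v, h1, h2, decS_mono G ih _ _ hs⟩

lemma decD_mono {k m : ℕ} (hkm : k ≤ m) (D S : Finset V) (h : decD G k D S) :
    decD G m D S := by
  induction hkm with
  | refl => exact h
  | step _ ih => exact decD_succ G _ _ _ ih

/-! ### Transfer along an equivalence -/

section Transfer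

variable {W : Type*} [DecidableEq W] (H : SimpleGraph W) (e : V ≃ W)

lemma dominates_equiv (hAdj : ∀ a b : V, G.Adj a b ↔ H.Adj (e a) (e b)) (D : Finset V) :
    Dominates G D ↔ Dominates H (D.map e.toEmbedding) := by
  constructor
  · intro h w
    obtain ⟨d, hd, hor⟩ := h (e.symm w)
    refine ⟨e d, Finset.mem_map_of_mem _ hd, ?_⟩
    rcases hor with h' | h'
    · left; rw [h', Equiv.apply_symm_apply]
    · right; have := (hAdj d (e.symm w)).1 h'; rwa [Equiv.apply_symm_apply] at this
  · intro h v
    obtain ⟨d, hd, hor⟩ := h (e v)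
    obtain ⟨d', hd', rfl⟩ := Finset.mem_map.1 hd
    refine ⟨d', hd', ?_⟩
    rcases hor with h' | h'
    · left; exact e.injective h'
    · right; exact (hAdj _ _).2 h'

lemma mem_map_equiv' (v : V) (D : Finset V) :
    e v ∈ D.map e.toEmbedding ↔ v ∈ D := by
  rw [Finset.mem_map]
  constructor
  · rintro ⟨d, hd, h⟩; rwa [← e.injective h]
  · exact fun h => ⟨v, h, rfl⟩

lemma decS_equiv (hAdj : ∀ a b : V, G.Adj a b ↔ H.Adj (e a) (e b)) (f : Finset V → Finset V → Prop) (g : Finset W → Finset W → Prop)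
    (hfg : ∀ D S, f D S ↔ g (D.map e.toEmbedding) (S.map e.toEmbedding)) (D S : Finset V) :
    decS G f D S ↔ decS H g (D.map e.toEmbedding) (S.map e.toEmbedding) := by
  unfold decS
  rw [dominates_equiv G H e hAdj]
  apply or_congr Iff.rfl
  apply and_congr
  · constructor
    · rintro ⟨v, h1, h2⟩
      exact ⟨e v, by rwa [mem_map_equiv'], by rwa [mem_map_equiv']⟩
    · rintro ⟨w, h1, h2⟩
      refine ⟨e.symm w, ?_, ?_⟩
      · rw [← mem_map_equiv' e (e.symm w) D, Equiv.apply_symm_apply]; exact h1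
      · rw [← mem_map_equiv' e (e.symm w) S, Equiv.apply_symm_apply]; exact h2
  · constructor
    · intro h w h1 h2
      have h1' : e.symm w ∉ D := by
        rw [← mem_map_equiv' e (e.symm w) D, Equiv.apply_symm_apply]; exact h1
      have h2' : e.symm w ∉ S := by
        rw [← mem_map_equiv' e (e.symm w) S, Equiv.apply_symm_apply]; exact h2
      have := (hfg D (insert (e.symm w) S)).1 (h _ h1' h2')
      simpa using this
    · intro h v h1 h2
      rw [hfg, Finset.map_insert]
      exact h (e v) (by rwa [mem_map_equiv']) (by rwa [mem_map_equiv'])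

lemma decD_equiv (hAdj : ∀ a b : V, G.Adj a b ↔ H.Adj (e a) (e b)) : ∀ (k : ℕ) (D S : Finset V),
    decD G k D S ↔ decD H k (D.map e.toEmbedding) (S.map e.toEmbedding) := by
  intro k
  induction k with
  | zero => exact fun D S => dominates_equiv G H e hAdj D
  | succ k ih =>
    intro D S
    show (Dominates G D ∨ _) ↔ (Dominates H _ ∨ _)
    rw [dominates_equiv G H e hAdj]
    apply or_congr Iff.rfl
    constructor
    · rintro ⟨v, h1, h2, hs⟩
      refine ⟨e v, by rwa [mem_map_equiv'], by rwa [mem_map_equiv'], ?_⟩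
      have := (decS_equiv G H e hAdj _ _ ih (insert v D) S).1 hs
      simpa using this
    · rintro ⟨w, h1, h2, hs⟩
      refine ⟨e.symm w, ?_, ?_, ?_⟩
      · rw [← mem_map_equiv' e (e.symm w) D, Equiv.apply_symm_apply]; exact h1
      · rw [← mem_map_equiv' e (e.symm w) S, Equiv.apply_symm_apply]; exact h2
      · rw [decS_equiv G H e hAdj _ _ ih]
        simpa using hs

end Transfer

/-! ### The concrete grid on `Fin 9` via bitmasks -/

/-- Open-neighborhood bitmask of vertex `v = 3*i+j` in the 3×3 grid. -/
def nmask : Fin 9 → ℕ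
  | 0 => 10
  | 1 => 21
  | 2 => 34
  | 3 => 81
  | 4 => 170
  | 5 => 276
  | 6 => 136
  | 7 => 336
  | 8 => 160

/-- The 3×3 grid graph on `Fin 9`, with fast mask-based adjacency. -/
lemma nmask_symm : ∀ u v : Fin 9,
    Nat.testBit (nmask u) v.val = true → Nat.testBit (nmask v) u.val = true := by decide

lemma nmask_irrefl : ∀ u : Fin 9, ¬ Nat.testBit (nmask u) u.val = true := by decide

def grid9 : SimpleGraph (Fin 9) where
  Adj u v := Nat.testBit (nmask u) v.val
  symm := ⟨fun u v h => nmask_symm u v h⟩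
  loopless := ⟨fun u h => nmask_irrefl u h⟩

instance : DecidableRel grid9.Adj := fun u v =>
  inferInstanceAs (Decidable (Nat.testBit (nmask u) v.val = true))

/-- The explicit equivalence `Fin 3 × Fin 3 ≃ Fin 9`. -/
def gridEquiv : Fin 3 × Fin 3 ≃ Fin 9 where
  toFun p := ⟨3 * p.1.val + p.2.val, by have := p.1.isLt; have := p.2.isLt; omega⟩
  invFun v := (⟨v.val / 3, by have := v.isLt; omega⟩, ⟨v.val % 3, by omega⟩)
  left_inv := by decide
  right_inv := by decide

lemma gridAdj : ∀ a b : Fin 3 × Fin 3,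
    (SimpleGraph.pathGraph 3 □ SimpleGraph.pathGraph 3).Adj a b ↔
      grid9.Adj (gridEquiv a) (gridEquiv b) := by decide

/-! ### Pure `Nat` bitmask version of the game -/

/-- `mdom m`: the vertex set with bitmask `m` dominates the 3×3 grid. -/
def mdom (m : ℕ) : Bool :=
  (List.finRange 9).all fun v => (List.finRange 9).any fun d =>
    m.testBit d.val && (d == v || (nmask d).testBit v.val)

/-- Bitmask version of `decS`. -/
def mdecS (f : ℕ → ℕ → Bool) (m s : ℕ) : Bool :=
  mdom m || (((List.finRange 9).any fun v => !m.testBit v.val && !s.testBit v.val) &&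
    (List.finRange 9).all fun v =>
      m.testBit v.val || s.testBit v.val || f m (s ||| 2 ^ v.val))

/-- Dominator's candidate moves, in a good search order (center first). -/
def DL : List (Fin 9) := [4, 1, 3, 5, 7, 0, 2, 6, 8]

lemma mem_DL : ∀ v : Fin 9, v ∈ DL := by decide

/-- Bitmask version of `decD`. -/
def mdecD : ℕ → ℕ → ℕ → Bool
  | 0, m, _ => mdom m
  | (k+1), m, s => mdom m || (DL.any fun v =>
      !m.testBit v.val && !s.testBit v.val && mdecS (mdecD k) (m ||| 2 ^ v.val) s)

/-- Correspondence between a `Finset (Fin 9)` and a bitmask. -/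
def MR (D : Finset (Fin 9)) (m : ℕ) : Prop := ∀ v : Fin 9, v ∈ D ↔ m.testBit v.val

lemma MR_empty : MR ∅ 0 := fun v => by simp [Nat.zero_testBit]

lemma MR_insert {D : Finset (Fin 9)} {m : ℕ} (h : MR D m) (v : Fin 9) :
    MR (insert v D) (m ||| 2 ^ v.val) := by
  intro w
  rw [Finset.mem_insert, Nat.testBit_or, h w, Nat.testBit_two_pow]
  rcases eq_or_ne w v with rfl | hne
  · simp
  · have : ¬ (v.val = w.val) := fun hv => hne (Fin.ext hv.symm)
    simp [hne, this]

lemma MR_notMem {D : Finset (Fin 9)} {m : ℕ} (h : MR D m) (v : Fin 9) :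
    v ∉ D ↔ (!m.testBit v.val) = true := by
  rw [h v, Bool.not_eq_true']
  exact ⟨fun h' => by simpa using h', fun h' => by simp [h']⟩

lemma mdom_iff {D : Finset (Fin 9)} {m : ℕ} (h : MR D m) :
    Dominates grid9 D ↔ mdom m = true := by
  unfold Dominates mdom
  simp only [List.all_eq_true, List.any_eq_true, List.mem_finRange, true_and, true_implies,
    Bool.and_eq_true, Bool.or_eq_true, beq_iff_eq]
  refine forall_congr' fun v => ?_
  constructor
  · rintro ⟨d, hd, hor⟩
    exact ⟨d, (h d).1 hd, hor.imp (fun h' => h') (fun h' => h')⟩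
  · rintro ⟨d, hd, hor⟩
    exact ⟨d, (h d).2 hd, hor.imp (fun h' => h') (fun h' => h')⟩

lemma mdecS_iff {f : Finset (Fin 9) → Finset (Fin 9) → Prop} {g : ℕ → ℕ → Bool}
    (hfg : ∀ D S m s, MR D m → MR S s → (f D S ↔ g m s = true))
    {D S : Finset (Fin 9)} {m s : ℕ} (hD : MR D m) (hS : MR S s) :
    decS grid9 f D S ↔ mdecS g m s = true := by
  unfold decS mdecS
  rw [Bool.or_eq_true, Bool.and_eq_true, ← mdom_iff hD]
  apply or_congr Iff.rfl
  apply and_congr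
  · simp only [List.any_eq_true, List.mem_finRange, true_and, Bool.and_eq_true]
    exact exists_congr fun v => and_congr (MR_notMem hD v) (MR_notMem hS v)
  · simp only [List.all_eq_true, List.mem_finRange, Bool.or_eq_true, true_implies]
    refine forall_congr' fun v => ?_
    constructor
    · intro hall
      by_cases hvD : v ∈ D
      · left; left; exact (hD v).1 hvD
      · by_cases hvS : v ∈ S
        · left; right; exact (hS v).1 hvS
        · right; exact (hfg D (insert v S) m (s ||| 2 ^ v.val) hD (MR_insert hS v)).1
            (hall hvD hvS)
    · intro hor hvD hvS
      rcases hor with (h' | h') | h'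
      · exact absurd ((hD v).2 h') hvD
      · exact absurd ((hS v).2 h') hvS
      · exact (hfg D (insert v S) m (s ||| 2 ^ v.val) hD (MR_insert hS v)).2 h'

lemma mdecD_iff : ∀ (k : ℕ) {D S : Finset (Fin 9)} {m s : ℕ},
    MR D m → MR S s → (decD grid9 k D S ↔ mdecD k m s = true) := by
  intro k
  induction k with
  | zero => exact fun hD _ => mdom_iff hD
  | succ k ih =>
    intro D S m s hD hS
    show (Dominates grid9 D ∨ _) ↔ _
    rw [mdecD, Bool.or_eq_true, ← mdom_iff hD]
    apply or_congr Iff.rfl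
    simp only [List.any_eq_true, mem_DL, true_and, Bool.and_eq_true]
    refine exists_congr fun v => ?_
    rw [← and_assoc]
    refine and_congr (and_congr (MR_notMem hD v) (MR_notMem hS v)) ?_
    exact mdecS_iff (fun D S m s hD hS => ih hD hS) (MR_insert hD v) hS

end Aux

set_option maxRecDepth 1000000 in
set_option maxHeartbeats 8000000 in
/-- `γ_MB(P_3 □ P_3) = γ_MB'(P_3 □ P_3) = 4`. -/
theorem stmt_14 :
    MBD.gMB (SimpleGraph.pathGraph 3 □ SimpleGraph.pathGraph 3) = 4 ∧
    MBD.gMB' (SimpleGraph.pathGraph 3 □ SimpleGraph.pathGraph 3) = 4 := by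
  set G := SimpleGraph.pathGraph 3 □ SimpleGraph.pathGraph 3 with hG
  have hDiff : ∀ k : ℕ, decD G k ∅ ∅ ↔ decD grid9 k ∅ ∅ := by
    intro k
    have := decD_equiv G grid9 gridEquiv gridAdj k ∅ ∅
    simpa using this
  have hSiff : ∀ k : ℕ, decS G (decD G k) ∅ ∅ ↔ decS grid9 (decD grid9 k) ∅ ∅ := by
    intro k
    have := decS_equiv G grid9 gridEquiv gridAdj (decD G k) (decD grid9 k)
      (decD_equiv G grid9 gridEquiv gridAdj k) ∅ ∅
    simpa using this
  have hDm : ∀ k : ℕ, decD grid9 k ∅ ∅ ↔ mdecD k 0 0 = true :=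
    fun k => mdecD_iff k MR_empty MR_empty
  have hSm : ∀ k : ℕ, decS grid9 (decD grid9 k) ∅ ∅ ↔ mdecS (mdecD k) 0 0 = true :=
    fun k => mdecS_iff (fun D S m s hD hS => mdecD_iff k hD hS) MR_empty MR_empty
  have h4D : decD G 4 ∅ ∅ := (hDiff 4).2 ((hDm 4).2 (by decide))
  have h3D : ¬ decD G 3 ∅ ∅ :=
    fun h => (by decide : ¬ mdecD 3 0 0 = true) ((hDm 3).1 ((hDiff 3).1 h))
  have h4S : decS G (decD G 4) ∅ ∅ := (hSiff 4).2 ((hSm 4).2 (by decide))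
  have h3S : ¬ decS G (decD G 3) ∅ ∅ :=
    fun h => (by decide : ¬ mdecS (mdecD 3) 0 0 = true) ((hSm 3).1 ((hSiff 3).1 h))
  constructor
  · apply le_antisymm
    · exact sInf_le ⟨4, (domD_iff G 4 ∅ ∅).2 h4D, rfl⟩
    · apply le_sInf
      rintro x ⟨k, hk, rfl⟩
      have hk4 : 4 ≤ k := by
        by_contra hlt
        exact h3D (decD_mono G (by omega) ∅ ∅ ((domD_iff G k ∅ ∅).1 hk))
      have : ((4:ℕ):ℕ∞) ≤ (k:ℕ∞) := Nat.cast_le.mpr hk4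
      simpa using this
  · apply le_antisymm
    · exact sInf_le ⟨4, (domS_iff G 4 ∅ ∅).2 h4S, rfl⟩
    · apply le_sInf
      rintro x ⟨k, hk, rfl⟩
      have hk4 : 4 ≤ k := by
        by_contra hlt
        have := (domS_iff G k ∅ ∅).1 hk
        exact h3S (decS_mono G (fun D S => decD_mono G (by omega) D S) ∅ ∅ this)
      have : ((4:ℕ):ℕ∞) ≤ (k:ℕ∞) := Nat.cast_le.mpr hk4
      simpa using this
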